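/- For any positive integer n and any vector s = (s_1,...,s_n) of nonnegative integers, the following identity holds: ∏_{i=1}^{n-1} (1 + ∑_{r=n-i+1}^{n} s_r) = ∑_{j} M(s_n+1, j_1) M(s_{n-1}-1, j_2) ··· M(s_2-1, j_{n-1}) · ∏_{i=1}^{n-1} (j_1 + ··· + j_i - i + 1), where M(m,k) = C(m+k-1, k) is the number of multisets of size k from a set of size m (interpreted via the generalized binomial, possibly negative when m ≤ 0), and the sum is over weak compositions j = (j_1,...,j_{n-1}) of n-1 with j_1 + ··· + j_i ≥ i for all i. -/

import Mathlib

/-!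
Write `x₀ = sₙ + 1` and `x_t = s_{n-t} - 1` for `t ≥ 1`, and let `L_m(N)` be the right-hand side
with the dominance condition dropped, taken over weak compositions of `N` into `m` parts. The
condition can be dropped because the partial sums `j₀ + ⋯ + jᵢ` are monotone in `i`: if one of them
is at most `i`, then one of them equals its index, and the product of the factors
`j₀ + ⋯ + jᵢ - i` vanishes.

Splitting off the last part gives `L_{m+1}(N) = (N - m) ∑_{a+b=N} M(x_m, b) L_m(a)`. Induction on
`m`, using Chu–Vandermonde `M(y + z, k) = ∑_{a+b=k} M(y, a) M(z, b)` and the absorption identity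
`(k + 1) M(z, k + 1) = z M(z + 1, k)`, then gives `L_m(N) = 0` for `N < m` and
`L_m(m + k) = ∏_{i<m} (Y_{i+1} - 1) · M(Y_m, k)`, where `Y_i = ∑_{t<i} (x_t + 1)`.
For `k = 0` and `m = n - 1` this is the left-hand side.
-/

open Finset

namespace Ring

variable {R : Type*}

theorem succ_nsmul_multichoose_succ [NonAssocRing R] [Pow R ℕ] [NatPowAssoc R] [BinomialRing R]
    (r : R) (k : ℕ) : (k + 1) • multichoose r (k + 1) = multichoose (r + 1) k * r := by
  have h := choose_smul_choose (r + k) (Nat.le_add_right k 1)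
  rw [Nat.choose_succ_self_right, add_sub_cancel_right, Nat.add_sub_cancel_left,
    choose_one_right] at h
  rw [multichoose_eq, multichoose_eq, Nat.cast_succ, ← add_assoc, add_right_comm r 1,
    add_sub_cancel_right, h]

theorem multichoose_eq_neg_one_pow_mul_choose_neg [CommRing R] [BinomialRing R] (r : R) (k : ℕ) :
    multichoose r k = (-1) ^ k * choose (-r) k := by
  rw [choose_neg', Units.smul_def, zsmul_eq_mul, ← mul_assoc, Int.cast_negOnePow_natCast,
    ← mul_pow]
  simp

theorem multichoose_add [CommRing R] [BinomialRing R] (r s : R) (k : ℕ) :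
    multichoose (r + s) k = ∑ ij ∈ antidiagonal k, multichoose r ij.1 * multichoose s ij.2 := by
  rw [multichoose_eq_neg_one_pow_mul_choose_neg, neg_add, add_choose_eq _ (Commute.all _ _),
    mul_sum]
  refine sum_congr rfl fun ij hij => ?_
  rw [multichoose_eq_neg_one_pow_mul_choose_neg, multichoose_eq_neg_one_pow_mul_choose_neg,
    ← mem_antidiagonal.mp hij, pow_add]
  ring

end Ring

theorem Nat.exists_le_eq_self_of_monotone {f : ℕ → ℕ} (hf : Monotone f) {n : ℕ} (hn : f n ≤ n) :
    ∃ t ≤ n, f t = t := by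
  induction n with
  | zero => exact ⟨0, le_rfl, Nat.le_zero.mp hn⟩
  | succ n ih =>
    by_cases h : f n ≤ n
    · obtain ⟨t, ht, hft⟩ := ih h
      exact ⟨t, ht.trans n.le_succ, hft⟩
    · exact ⟨n + 1, le_rfl, le_antisymm hn (by have := hf (Nat.le_add_right n 1); omega)⟩

namespace Finset.Nat

theorem sum_antidiagonal_add {M : Type*} [AddCommMonoid M] {f : ℕ × ℕ → M} {m : ℕ}
    (hf : ∀ a b, a < m → f (a, b) = 0) (n : ℕ) :
    ∑ p ∈ antidiagonal (m + n), f p = ∑ p ∈ antidiagonal n, f (m + p.1, p.2) := by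
  induction m generalizing f with
  | zero => simp
  | succ m ih =>
    rw [add_right_comm, sum_antidiagonal_succ, hf 0 _ m.succ_pos, zero_add,
      ih fun a b ha => hf (a + 1) b (by omega)]
    simp only [add_right_comm]

theorem sum_antidiagonalTuple_succ {M : Type*} [AddCommMonoid M] (k N : ℕ)
    (f : (Fin (k + 1) → ℕ) → M) :
    ∑ j ∈ antidiagonalTuple (k + 1) N, f j =
      ∑ p ∈ antidiagonal N, ∑ j ∈ antidiagonalTuple k p.1, f (Fin.snoc j p.2) := by
  rw [sum_sigma']
  refine sum_nbij' (fun j => ⟨(∑ i, Fin.init j i, j (Fin.last k)), Fin.init j⟩)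
    (fun q => Fin.snoc q.2 q.1.2) ?_ ?_ ?_ ?_ ?_
  · intro j hj
    simp_all [mem_antidiagonalTuple, Fin.sum_univ_castSucc, Fin.init]
  · rintro ⟨⟨a, b⟩, j⟩ hq
    simp_all [mem_antidiagonalTuple, Fin.sum_univ_castSucc]
  · intro j _
    simp
  · rintro ⟨⟨a, b⟩, j⟩ hq
    simp_all [mem_antidiagonalTuple]
  · intro j _
    simp

end Finset.Nat

namespace SPermutahedron

theorem prod_partialSum_sub_eq_zero {m : ℕ} (j : Fin m → ℕ) {i : Fin m}
    (hi : ∑ k ∈ Iic i, j k ≤ i) : ∏ i : Fin m, ((∑ k ∈ Iic i, (j k : ℤ)) - i) = 0 := by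
  have hIic (i : Fin m) : Iic i = univ.filter fun k : Fin m => (k : ℕ) ≤ i := by
    ext k
    simp only [mem_Iic, mem_filter, mem_univ, true_and, Fin.le_def]
  have hmono : Monotone fun t => ∑ k ∈ univ.filter fun k : Fin m => (k : ℕ) ≤ t, j k :=
    fun t t' htt' => sum_le_sum_of_subset fun k => by simpa using fun hk => hk.trans htt'
  obtain ⟨t, hti, ht⟩ := Nat.exists_le_eq_self_of_monotone hmono (n := i) (by rwa [← hIic])
  refine prod_eq_zero (mem_univ ⟨t, by omega⟩) (sub_eq_zero.mpr ?_)
  rw [hIic]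
  exact_mod_cast ht

/-- The indices are `0`-based: the factor `∑_{k ≤ i} j k - i` is the paper's
`j₁ + ⋯ + j_{i+1} - (i + 1) + 1`. -/
def lidskiiSum (x : ℕ → ℤ) (m N : ℕ) : ℤ :=
  ∑ j ∈ Nat.antidiagonalTuple m N,
    (∏ i : Fin m, Ring.multichoose (x i) (j i)) * ∏ i : Fin m, ((∑ k ∈ Iic i, (j k : ℤ)) - i)

section

variable (x : ℕ → ℤ)

theorem lidskiiSum_eq_sum_filter (m N : ℕ) :
    lidskiiSum x m N =
      ∑ j ∈ (Nat.antidiagonalTuple m N).filter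
          (fun j => ∀ i : Fin m, (i : ℕ) + 1 ≤ ∑ k ∈ Iic i, j k),
        (∏ i : Fin m, Ring.multichoose (x i) (j i)) *
          ∏ i : Fin m, ((∑ k ∈ Iic i, (j k : ℤ)) - i) := by
  refine (sum_filter_of_ne fun j _ hj i => ?_).symm
  by_contra! hi
  exact hj (by rw [prod_partialSum_sub_eq_zero j (Nat.lt_succ_iff.mp hi), mul_zero])

theorem lidskiiSum_zero (k : ℕ) : lidskiiSum x 0 k = Ring.multichoose 0 k := by
  cases k <;> simp [lidskiiSum]

theorem lidskiiSum_succ (m N : ℕ) :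
    lidskiiSum x (m + 1) N =
      ∑ p ∈ antidiagonal N, Ring.multichoose (x m) p.2 * (N - m) * lidskiiSum x m p.1 := by
  rw [lidskiiSum, Nat.sum_antidiagonalTuple_succ]
  refine sum_congr rfl fun p hp => ?_
  rw [lidskiiSum, mul_sum]
  refine sum_congr rfl fun j hj => ?_
  have htotal : ∑ k ∈ Iic (Fin.last m), ((Fin.snoc j p.2 : Fin (m + 1) → ℕ) k : ℤ) = N := by
    rw [show Iic (Fin.last m) = univ from Iic_top, Fin.sum_univ_castSucc]
    simp only [Fin.snoc_castSucc, Fin.snoc_last]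
    rw [← mem_antidiagonal.mp hp, ← Nat.mem_antidiagonalTuple.mp hj]
    push_cast
    rfl
  simp only [Fin.prod_univ_castSucc, Fin.snoc_castSucc, Fin.snoc_last, Fin.sum_Iic_castSucc,
    htotal, Fin.val_castSucc, Fin.val_last]
  ring

theorem lidskiiSum_of_lt {m N : ℕ} (h : N < m) : lidskiiSum x m N = 0 := by
  induction m generalizing N with
  | zero => omega
  | succ m ih =>
    rw [lidskiiSum_succ]
    refine sum_eq_zero fun p hp => ?_
    have hp := mem_antidiagonal.mp hp
    rcases lt_or_eq_of_le (show p.1 ≤ m by omega) with hlt | hpm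
    · rw [ih hlt, mul_zero]
    · rw [show (N : ℤ) = m by omega, sub_self, mul_zero, zero_mul]

theorem lidskiiSum_add (m k : ℕ) :
    lidskiiSum x m (m + k) =
      (∏ i ∈ range m, (∑ t ∈ range (i + 1), (x t + 1) - 1)) *
        Ring.multichoose (∑ t ∈ range m, (x t + 1)) k := by
  induction m generalizing k with
  | zero => simp [lidskiiSum_zero]
  | succ m ih =>
    set Y := ∑ t ∈ range m, (x t + 1)
    have hY : ∑ t ∈ range (m + 1), (x t + 1) = Y + x m + 1 := by
      rw [sum_range_succ]; ring
    rw [lidskiiSum_succ, show m + 1 + k = m + (k + 1) by ring,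
      Nat.sum_antidiagonal_add fun a b ha => by rw [lidskiiSum_of_lt x ha, mul_zero]]
    simp only [ih, prod_range_succ, hY, add_sub_cancel_right]
    calc ∑ p ∈ antidiagonal (k + 1),
          Ring.multichoose (x m) p.2 * (((m + (k + 1) : ℕ) : ℤ) - m) *
            ((∏ i ∈ range m, (∑ t ∈ range (i + 1), (x t + 1) - 1)) * Ring.multichoose Y p.1)
        = (∏ i ∈ range m, (∑ t ∈ range (i + 1), (x t + 1) - 1)) *
            ((k + 1) • Ring.multichoose (Y + x m) (k + 1)) := by
          rw [Ring.multichoose_add, nsmul_eq_mul, mul_sum, mul_sum]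
          refine sum_congr rfl fun p _ => ?_
          push_cast
          ring
      _ = _ := by rw [Ring.succ_nsmul_multichoose_succ]; ring

theorem lidskiiSum_self (m : ℕ) :
    lidskiiSum x m m = ∏ i ∈ range m, (∑ t ∈ range (i + 1), (x t + 1) - 1) := by
  have h := lidskiiSum_add x m 0
  rwa [add_zero, Ring.multichoose_zero_right, mul_one] at h

end

theorem second_lidskii_decomposition_general (n : ℕ) (s : ℕ → ℕ) :
    (∏ i ∈ Finset.Icc 1 (n - 1), (1 + ∑ r ∈ Finset.Icc (n - i + 1) n, (s r : ℤ))) =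
      ∑ j ∈ (Finset.Nat.antidiagonalTuple (n - 1) (n - 1)).filter
          (fun j => ∀ i : Fin (n - 1), (i : ℕ) + 1 ≤ ∑ k ∈ Finset.Iic i, j k),
        (∏ i : Fin (n - 1),
            Ring.multichoose
              (if (i : ℕ) = 0 then (s n : ℤ) + 1 else (s (n - (i : ℕ)) : ℤ) - 1) (j i)) *
          ∏ i : Fin (n - 1), ((∑ k ∈ Finset.Iic i, (j k : ℤ)) - ((i : ℕ) : ℤ)) := by
  refine .trans ?_ (lidskiiSum_eq_sum_filter
    (fun t => if t = 0 then (s n : ℤ) + 1 else (s (n - t) : ℤ) - 1) (n - 1) (n - 1))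
  rw [lidskiiSum_self, ← Ico_add_one_right_eq_Icc, prod_Ico_eq_prod_range, Nat.add_sub_cancel]
  refine prod_congr rfl fun i hi => ?_
  rw [mem_range] at hi
  have hreflect : ∑ r ∈ Icc (n - i) n, (s r : ℤ) = ∑ t ∈ range (i + 1), (s (n - t) : ℤ) := by
    rw [range_eq_Ico, sum_Ico_reflect (fun r => (s r : ℤ)) 0 (by omega),
      ← Ico_add_one_right_eq_Icc, Nat.add_sub_add_right, Nat.sub_zero]
  rw [show n - (1 + i) + 1 = n - i by omega, hreflect, sum_range_succ', sum_range_succ']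
  simp only [Nat.add_one_ne_zero, if_false, if_true, Nat.sub_zero, sub_add_cancel]
  ring

/-- (Second Lidskii-type decomposition, Eq. (5).) For a vector
`s = (s₁, …, sₙ)` of nonnegative integers,
`∏_{i=1}^{n-1} (1 + ∑_{r=n-i+1}^n s_r)
  = ∑_j M(sₙ+1, j₁) M(sₙ₋₁-1, j₂) ⋯ M(s₂-1, j_{n-1}) ∏_{i=1}^{n-1} (j₁+⋯+jᵢ-i+1)`,
over weak compositions `j` of `n-1` dominating `(1, …, 1)`, where
`M(m, k) = C(m+k-1, k)` is the generalized multiset coefficient, interpreted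
via the integer-valued polynomial extension (`Ring.multichoose` on `ℤ`). -/
theorem second_lidskii_decomposition (n : ℕ) (hn : 0 < n) (s : ℕ → ℕ) :
    (∏ i ∈ Finset.Icc 1 (n - 1), (1 + ∑ r ∈ Finset.Icc (n - i + 1) n, (s r : ℤ))) =
      ∑ j ∈ (Finset.Nat.antidiagonalTuple (n - 1) (n - 1)).filter
          (fun j => ∀ i : Fin (n - 1), (i : ℕ) + 1 ≤ ∑ k ∈ Finset.Iic i, j k),
        (∏ i : Fin (n - 1),
            Ring.multichoose
              (if (i : ℕ) = 0 then (s n : ℤ) + 1 else (s (n - (i : ℕ)) : ℤ) - 1) (j i)) *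
          ∏ i : Fin (n - 1), ((∑ k ∈ Finset.Iic i, (j k : ℤ)) - ((i : ℕ) : ℤ)) :=
  second_lidskii_decomposition_general n s

end SPermutahedron
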